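/- Let Σ be a positive semidefinite p × p real matrix, T₀ ⊆ {1,…,p} with |T₀| = S ≥ 1, and let ε ≥ 0 and c ≥ 0. Suppose h ∈ C_{T₀} satisfies hᵀΣh ≤ ε‖h‖₁² + c‖h‖₁, and suppose the compatibility factor satisfies κ(T₀; Σ)² > 4Sε. Then ‖h‖₁ ≤ 4Sc / (κ(T₀; Σ)² − 4Sε). -/

import Mathlib

open Matrix Finset

noncomputable def l1 {p : ℕ} (h : Fin p → ℝ) : ℝ := ∑ j, |h j|
noncomputable def l2 {p : ℕ} (h : Fin p → ℝ) : ℝ := Real.sqrt (∑ j, (h j) ^ 2)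
noncomputable def lqNorm {p : ℕ} (q : ℝ) (h : Fin p → ℝ) : ℝ := (∑ j, |h j| ^ q) ^ (1 / q)
noncomputable def linf {p : ℕ} (h : Fin p → ℝ) : ℝ := ⨆ j, |h j|
def restr {p : ℕ} (T : Finset (Fin p)) (h : Fin p → ℝ) : Fin p → ℝ :=
  fun j => if j ∈ T then h j else 0
def coneC {p : ℕ} (T : Finset (Fin p)) (h : Fin p → ℝ) : Prop :=
  l1 (restr Tᶜ h) ≤ l1 (restr T h)
noncomputable def quad {p : ℕ} (M : Matrix (Fin p) (Fin p) ℝ) (h : Fin p → ℝ) : ℝ :=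
  h ⬝ᵥ M.mulVec h

/-- Compatibility factor `κ(T₀; M) = inf_{0 ≠ h ∈ C_{T₀}} √|T₀| (hᵀMh)^{1/2} / ‖h_{T₀}‖₁`. -/
noncomputable def kappa {p : ℕ} (T0 : Finset (Fin p)) (M : Matrix (Fin p) (Fin p) ℝ) : ℝ :=
  sInf {x | ∃ h : Fin p → ℝ, h ≠ 0 ∧ coneC T0 h ∧
    x = Real.sqrt (T0.card) * Real.sqrt (quad M h) / l1 (restr T0 h)}

/-- Restricted eigenvalue `RE(T₀; M) = inf_{0 ≠ h ∈ C_{T₀}} (hᵀMh)^{1/2} / ‖h‖₂`. -/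
noncomputable def RE {p : ℕ} (T0 : Finset (Fin p)) (M : Matrix (Fin p) (Fin p) ℝ) : ℝ :=
  sInf {x | ∃ h : Fin p → ℝ, h ≠ 0 ∧ coneC T0 h ∧ x = Real.sqrt (quad M h) / l2 h}

/-- Weak cone invertibility factor
`F_q(T₀; M) = inf_{0 ≠ h ∈ C_{T₀}} |T₀|^{1/q} (hᵀMh) / (‖h_{T₀}‖₁ ‖h‖_q)`. -/
noncomputable def Fq {p : ℕ} (q : ℝ) (T0 : Finset (Fin p)) (M : Matrix (Fin p) (Fin p) ℝ) : ℝ :=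
  sInf {x | ∃ h : Fin p → ℝ, h ≠ 0 ∧ coneC T0 h ∧
    x = (T0.card : ℝ) ^ (1 / q) * quad M h / (l1 (restr T0 h) * lqNorm q h)}

/-!
Membership in the cone gives `‖h‖₁ ≤ 2 ‖h_{T₀}‖₁`, and the definition of `κ` gives
`κ² ‖h_{T₀}‖₁² ≤ S hᵀΣh`; together `κ² ‖h‖₁² ≤ 4S hᵀΣh ≤ 4S (ε ‖h‖₁² + c ‖h‖₁)`,
and dividing by `‖h‖₁` (when nonzero) yields the bound.
-/

section

variable {p : ℕ}

lemma l1_nonneg (h : Fin p → ℝ) : 0 ≤ l1 h :=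
  sum_nonneg fun _ _ => abs_nonneg _

lemma l1_zero : l1 (0 : Fin p → ℝ) = 0 := by
  simp [l1]

lemma restr_zero (T : Finset (Fin p)) : restr T 0 = 0 := by
  ext j
  simp [restr]

lemma l1_eq_l1_restr_add_l1_restr_compl (T : Finset (Fin p)) (h : Fin p → ℝ) :
    l1 h = l1 (restr T h) + l1 (restr Tᶜ h) := by
  unfold l1 restr
  rw [← sum_add_distrib]
  refine sum_congr rfl fun j _ => ?_
  by_cases hj : j ∈ T <;> simp [hj]

lemma coneC.l1_le_two_mul_l1_restr {T : Finset (Fin p)} {h : Fin p → ℝ} (hcone : coneC T h) :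
    l1 h ≤ 2 * l1 (restr T h) := by
  rw [l1_eq_l1_restr_add_l1_restr_compl T h]
  unfold coneC at hcone
  linarith

lemma quad_nonneg {M : Matrix (Fin p) (Fin p) ℝ} (hM : M.PosSemidef) (h : Fin p → ℝ) :
    0 ≤ quad M h := by
  simpa [quad, dotProduct, mul_comm] using hM.dotProduct_mulVec_nonneg h

section kappa

variable (T : Finset (Fin p)) (M : Matrix (Fin p) (Fin p) ℝ)

lemma kappa_set_nonneg : ∀ x ∈ {x | ∃ h : Fin p → ℝ, h ≠ 0 ∧ coneC T h ∧
    x = Real.sqrt (T.card) * Real.sqrt (quad M h) / l1 (restr T h)}, 0 ≤ x := by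
  rintro x ⟨h, -, -, rfl⟩
  exact div_nonneg (mul_nonneg (Real.sqrt_nonneg _) (Real.sqrt_nonneg _)) (l1_nonneg _)

lemma kappa_nonneg : 0 ≤ kappa T M :=
  Real.sInf_nonneg (kappa_set_nonneg T M)

lemma kappa_le {h : Fin p → ℝ} (hh : h ≠ 0) (hcone : coneC T h) :
    kappa T M ≤ Real.sqrt (T.card) * Real.sqrt (quad M h) / l1 (restr T h) :=
  csInf_le ⟨0, kappa_set_nonneg T M⟩ ⟨h, hh, hcone, rfl⟩

variable {T M}

lemma kappa_sq_mul_l1_restr_sq_le (hM : M.PosSemidef) {h : Fin p → ℝ} (hcone : coneC T h) :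
    kappa T M ^ 2 * l1 (restr T h) ^ 2 ≤ T.card * quad M h := by
  have hQ := quad_nonneg hM h
  rcases (l1_nonneg (restr T h)).eq_or_lt with hL | hL
  · rw [← hL]
    simpa using mul_nonneg (Nat.cast_nonneg T.card) hQ
  have hh : h ≠ 0 := by
    rintro rfl
    rw [restr_zero, l1_zero] at hL
    exact hL.false
  have hKL : kappa T M * l1 (restr T h) ≤ Real.sqrt (T.card) * Real.sqrt (quad M h) :=
    (le_div_iff₀ hL).1 (kappa_le T M hh hcone)
  calc kappa T M ^ 2 * l1 (restr T h) ^ 2 = (kappa T M * l1 (restr T h)) ^ 2 := by ring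
    _ ≤ (Real.sqrt (T.card) * Real.sqrt (quad M h)) ^ 2 :=
        pow_le_pow_left₀ (mul_nonneg (kappa_nonneg T M) hL.le) hKL 2
    _ = T.card * quad M h := by
        rw [mul_pow, Real.sq_sqrt (Nat.cast_nonneg _), Real.sq_sqrt hQ]

lemma kappa_sq_mul_l1_sq_le (hM : M.PosSemidef) {h : Fin p → ℝ} (hcone : coneC T h) :
    kappa T M ^ 2 * l1 h ^ 2 ≤ 4 * T.card * quad M h := by
  have hN : l1 h ^ 2 ≤ 4 * l1 (restr T h) ^ 2 := by
    nlinarith [hcone.l1_le_two_mul_l1_restr, l1_nonneg h]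
  calc kappa T M ^ 2 * l1 h ^ 2 ≤ 4 * (kappa T M ^ 2 * l1 (restr T h) ^ 2) := by
        nlinarith [sq_nonneg (kappa T M)]
    _ ≤ 4 * T.card * quad M h := by
        linarith [kappa_sq_mul_l1_restr_sq_le hM hcone]

end kappa

end

theorem stmt12_general {p : ℕ} (M : Matrix (Fin p) (Fin p) ℝ) (hM : M.PosSemidef)
    (T0 : Finset (Fin p)) (S : ℕ) (hS : T0.card = S)
    (ε c : ℝ) (hc : 0 ≤ c)
    (h : Fin p → ℝ) (hcone : coneC T0 h)
    (hquad : quad M h ≤ ε * l1 h ^ 2 + c * l1 h)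
    (hkappa : 4 * S * ε < kappa T0 M ^ 2) :
    l1 h ≤ 4 * S * c / (kappa T0 M ^ 2 - 4 * S * ε) := by
  have hden : 0 < kappa T0 M ^ 2 - 4 * S * ε := sub_pos.2 hkappa
  rw [le_div_iff₀ hden]
  have hsq : (kappa T0 M ^ 2 - 4 * S * ε) * l1 h ^ 2 ≤ 4 * S * c * l1 h := by
    have := kappa_sq_mul_l1_sq_le hM hcone
    rw [hS] at this
    nlinarith [mul_le_mul_of_nonneg_left hquad (by positivity : (0 : ℝ) ≤ 4 * S)]
  rcases (l1_nonneg h).eq_or_lt with hN | hN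
  · rw [← hN]
    simpa using mul_nonneg (by positivity : (0 : ℝ) ≤ 4 * S) hc
  · nlinarith

/-- deterministic core of Theorem 4.5(i): `l₁` bound. -/
theorem stmt12 {p : ℕ} (M : Matrix (Fin p) (Fin p) ℝ) (hM : M.PosSemidef)
    (T0 : Finset (Fin p)) (S : ℕ) (hS : T0.card = S) (hS1 : 1 ≤ S)
    (ε c : ℝ) (hε : 0 ≤ ε) (hc : 0 ≤ c)
    (h : Fin p → ℝ) (hcone : coneC T0 h)
    (hquad : quad M h ≤ ε * l1 h ^ 2 + c * l1 h)
    (hkappa : 4 * S * ε < kappa T0 M ^ 2) :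
    l1 h ≤ 4 * S * c / (kappa T0 M ^ 2 - 4 * S * ε) :=
  stmt12_general M hM T0 S hS ε c hc h hcone hquad hkappa
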